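/- arXiv:2105.12891 — 7 statements merged into one kernel-verified Lean document; each statement's English description precedes it below -/
import Mathlib

section
/- For all real numbers a, b, c, the quantity D = Λ(a+c)(1−Λ(b+c)) + (1−Λ(a+c))Λ(b+c) is strictly positive and Λ(a+c)(1−Λ(b+c))/D = Λ(a−b); in particular this ratio does not depend on c. (This is the key sufficiency computation behind the conditional-logit identification of β₀ in Lemma 1.) -/
/-!
Writing `P = (1 + eˣ)(1 + eʸ)`, the two terms of `D` at `x = a + c`, `y = b + c` are `eˣ / P` and
`eʸ / P`, so the ratio is `eˣ / (eˣ + eʸ) = Λ(x - y)` after dividing by `eʸ`; and `x - y = a - b`.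
-/

/-- The standard logistic CDF `Λ(u) = exp u / (1 + exp u)`. -/
noncomputable def logisticCDF (u : ℝ) : ℝ := Real.exp u / (1 + Real.exp u)

open Real

namespace logisticCDF

lemma pos (u : ℝ) : 0 < logisticCDF u := by
  unfold logisticCDF
  positivity

lemma lt_one (u : ℝ) : logisticCDF u < 1 := by
  unfold logisticCDF
  rw [div_lt_one (by positivity)]
  linarith [exp_pos u]

lemma mul_one_sub (x y : ℝ) :
    logisticCDF x * (1 - logisticCDF y) = exp x / ((1 + exp x) * (1 + exp y)) := by
  unfold logisticCDF
  field_simp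
  ring

lemma sub_eq (x y : ℝ) : logisticCDF (x - y) = exp x / (exp x + exp y) := by
  unfold logisticCDF
  rw [exp_sub]
  field_simp
  ring

lemma mul_one_sub_add_one_sub_mul_pos (x y : ℝ) :
    0 < logisticCDF x * (1 - logisticCDF y) + (1 - logisticCDF x) * logisticCDF y := by
  have := pos x; have := pos y; have := lt_one x; have := lt_one y
  positivity

lemma mul_one_sub_div_eq (x y : ℝ) :
    logisticCDF x * (1 - logisticCDF y) /
        (logisticCDF x * (1 - logisticCDF y) + (1 - logisticCDF x) * logisticCDF y) =
      logisticCDF (x - y) := by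
  have hP : (1 + exp x) * (1 + exp y) ≠ 0 := by positivity
  rw [mul_comm (1 - logisticCDF x), mul_one_sub, mul_one_sub, mul_comm (1 + exp y),
    ← add_div, div_div_div_cancel_right₀ hP, sub_eq]

end logisticCDF

/-- For all real `a`, `b`, `c`, the quantity
`D = Λ(a+c)(1−Λ(b+c)) + (1−Λ(a+c))Λ(b+c)` is strictly positive and
`Λ(a+c)(1−Λ(b+c))/D = Λ(a−b)`; in particular this ratio does not depend on `c`. -/
theorem stmt_0 (a b c : ℝ) :
    0 < logisticCDF (a + c) * (1 - logisticCDF (b + c)) +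
        (1 - logisticCDF (a + c)) * logisticCDF (b + c) ∧
    logisticCDF (a + c) * (1 - logisticCDF (b + c)) /
        (logisticCDF (a + c) * (1 - logisticCDF (b + c)) +
          (1 - logisticCDF (a + c)) * logisticCDF (b + c)) =
      logisticCDF (a - b) := by
  refine ⟨logisticCDF.mul_one_sub_add_one_sub_mul_pos _ _, ?_⟩
  rw [logisticCDF.mul_one_sub_div_eq, add_sub_add_right_eq_sub]
end

section
/- For all a, b ∈ ℝ and every Borel probability measure μ on ℝ, setting p₁₀ = ∫ Λ(a+c)(1−Λ(b+c)) dμ(c) and p₀₁ = ∫ (1−Λ(a+c))Λ(b+c) dμ(c), one has p₁₀ + p₀₁ > 0 and p₁₀/(p₁₀+p₀₁) = Λ(a−b). (This is the identity P((Y_s,Y_{s'})=(1,0) | Y_s+Y_{s'}=1, X=x) = Λ((x_s−x_{s'})'β₀) established in the proof of Lemma 1.) -/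
/-!
Writing `x = a + c`, `y = b + c`, both integrands share the denominator
`(1 + eˣ)(1 + eʸ)`, with numerators `eˣ` and `eʸ`. Hence pointwise
`Λ(x)(1 - Λ(y)) = eˣ / (eˣ + eʸ) · (sum of both integrands)`, and `eˣ / (eˣ + eʸ) = Λ(a - b)`
does not depend on `c`, so the ratio of the integrals equals it as well.
-/

open MeasureTheory

lemma logisticCDF_pos (u : ℝ) : 0 < logisticCDF u := by
  unfold logisticCDF
  positivity

lemma logisticCDF_lt_one (u : ℝ) : logisticCDF u < 1 := by
  unfold logisticCDF
  rw [div_lt_one (by positivity)]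
  linarith

lemma logisticCDF_mem_unitInterval (u : ℝ) : logisticCDF u ∈ unitInterval :=
  ⟨(logisticCDF_pos u).le, (logisticCDF_lt_one u).le⟩

@[fun_prop]
lemma continuous_logisticCDF : Continuous logisticCDF :=
  Real.continuous_exp.div (by fun_prop) fun _ => by positivity

@[fun_prop]
lemma measurable_logisticCDF : Measurable logisticCDF :=
  continuous_logisticCDF.measurable

lemma logisticCDF_sub (x y : ℝ) :
    logisticCDF (x - y) = Real.exp x / (Real.exp x + Real.exp y) := by
  rw [logisticCDF, Real.exp_sub]
  field_simp
  ring

lemma logisticCDF_mul_one_sub_eq (x y : ℝ) :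
    logisticCDF x * (1 - logisticCDF y) =
      logisticCDF (x - y) *
        (logisticCDF x * (1 - logisticCDF y) + (1 - logisticCDF x) * logisticCDF y) := by
  rw [logisticCDF_sub]
  unfold logisticCDF
  field_simp
  ring

lemma MeasureTheory.Integrable.of_forall_mem_unitInterval {α : Type*} [MeasurableSpace α]
    {μ : Measure α} [IsFiniteMeasure μ] {f : α → ℝ} (hf : AEStronglyMeasurable f μ)
    (h : ∀ x, f x ∈ unitInterval) : Integrable f μ :=
  .of_bound hf 1 <| .of_forall fun x => by
    rw [Real.norm_of_nonneg (h x).1]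
    exact (h x).2

lemma integral_pos_of_forall_pos {α : Type*} [MeasurableSpace α] {μ : Measure α} [NeZero μ]
    {f : α → ℝ} (hf : Integrable f μ) (hpos : ∀ x, 0 < f x) : 0 < ∫ x, f x ∂μ := by
  rw [integral_pos_iff_support_of_nonneg (fun x => (hpos x).le) hf,
    Function.support_eq_univ fun x => (hpos x).ne', Measure.measure_univ_pos]
  exact NeZero.ne μ

lemma integral_div_integral_add_eq {α : Type*} [MeasurableSpace α] {μ : Measure α} [NeZero μ]
    {f g : α → ℝ} {r : ℝ} (hf : Integrable f μ) (hg : Integrable g μ)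
    (hpos : ∀ x, 0 < f x + g x) (h : ∀ x, f x = r * (f x + g x)) :
    0 < (∫ x, f x ∂μ) + ∫ x, g x ∂μ ∧ (∫ x, f x ∂μ) / ((∫ x, f x ∂μ) + ∫ x, g x ∂μ) = r := by
  rw [← integral_add hf hg]
  have hsum : 0 < ∫ x, f x + g x ∂μ := integral_pos_of_forall_pos (hf.add hg) hpos
  refine ⟨hsum, ?_⟩
  rw [div_eq_iff hsum.ne', ← integral_const_mul]
  exact integral_congr_ae (.of_forall h)

/-- For all `a b : ℝ` and every Borel probability measure `μ` on `ℝ`, setting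
`p₁₀ = ∫ Λ(a+c)(1−Λ(b+c)) dμ(c)` and `p₀₁ = ∫ (1−Λ(a+c))Λ(b+c) dμ(c)`, one has
`p₁₀ + p₀₁ > 0` and `p₁₀/(p₁₀+p₀₁) = Λ(a−b)`. -/
theorem stmt_1 (a b : ℝ) (μ : Measure ℝ) [IsProbabilityMeasure μ] :
    0 < (∫ c, logisticCDF (a + c) * (1 - logisticCDF (b + c)) ∂μ) +
        (∫ c, (1 - logisticCDF (a + c)) * logisticCDF (b + c) ∂μ) ∧
    (∫ c, logisticCDF (a + c) * (1 - logisticCDF (b + c)) ∂μ) /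
        ((∫ c, logisticCDF (a + c) * (1 - logisticCDF (b + c)) ∂μ) +
          (∫ c, (1 - logisticCDF (a + c)) * logisticCDF (b + c) ∂μ)) =
      logisticCDF (a - b) := by
  have hΛ := logisticCDF_mem_unitInterval
  have h₁₀ : Integrable (fun c => logisticCDF (a + c) * (1 - logisticCDF (b + c))) μ :=
    .of_forall_mem_unitInterval (by fun_prop) fun c =>
      unitInterval.mul_mem (hΛ _) (Set.Icc.mem_iff_one_sub_mem.1 (hΛ _))
  have h₀₁ : Integrable (fun c => (1 - logisticCDF (a + c)) * logisticCDF (b + c)) μ :=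
    .of_forall_mem_unitInterval (by fun_prop) fun c =>
      unitInterval.mul_mem (Set.Icc.mem_iff_one_sub_mem.1 (hΛ _)) (hΛ _)
  refine integral_div_integral_add_eq h₁₀ h₀₁ (fun c => ?_) fun c => ?_
  · exact add_pos (mul_pos (logisticCDF_pos _) (sub_pos.2 (logisticCDF_lt_one _)))
      (mul_pos (sub_pos.2 (logisticCDF_lt_one _)) (logisticCDF_pos _))
  · simpa only [add_sub_add_right_eq_sub] using logisticCDF_mul_one_sub_eq (a + c) (b + c)
end

section
/- For every n with 0 ≤ n ≤ T and every y ∈ D_n, L(y) · ∑_{d∈D_n} exp(∑_{t=1}^T d_t a_t) = exp(∑_{t=1}^T y_t a_t) · ∑_{d∈D_n} L(d). Equivalently, the conditional probability of the outcome sequence y given that the outcomes sum to n equals exp(∑_t y_t a_t)/∑_{d∈D_n} exp(∑_t d_t a_t), and is free of the heterogeneity distribution μ (the Rasch/conditional-logit sufficiency fact underlying the conditional maximum likelihood estimator). -/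
open MeasureTheory Finset

/-- `L(y) = ∫ ∏_{t} Λ(a_t+c)^{y_t} (1−Λ(a_t+c))^{1−y_t} dμ(c)` for a binary outcome
sequence `y ∈ {0,1}^T`, encoded by `y : Fin T → Bool`. -/
noncomputable def rlikelihood {T : ℕ} (a : Fin T → ℝ) (μ : Measure ℝ)
    (y : Fin T → Bool) : ℝ :=
  ∫ c, ∏ t, (if y t then logisticCDF (a t + c) else 1 - logisticCDF (a t + c)) ∂μ

/-- `D_n = {d ∈ {0,1}^T : ∑_t d_t = n}`. -/
def sumFiber (T n : ℕ) : Finset (Fin T → Bool) :=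
  Finset.univ.filter fun d => (∑ t, if d t then 1 else 0) = n

/-
Writing `Λ(u) = eᵘ / (1 + eᵘ)` and `1 - Λ(u) = 1 / (1 + eᵘ)`, the integrand of `L(d)` factors as
`exp (∑ₜ dₜ aₜ) · exp ((∑ₜ dₜ) c) / ∏ₜ (1 + exp (aₜ + c))`. On `D_n` the middle factor is `exp (n c)`,
so `L(d) = exp (∑ₜ dₜ aₜ) · J` for one integral `J` not depending on `d ∈ D_n`, and both sides of
the identity equal `exp (∑ₜ yₜ aₜ) · J · ∑_{d ∈ D_n} exp (∑ₜ dₜ aₜ)`.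
-/

lemma one_sub_logisticCDF (u : ℝ) : 1 - logisticCDF u = 1 / (1 + Real.exp u) := by
  have : 1 + Real.exp u ≠ 0 := by positivity
  rw [logisticCDF]
  field_simp
  ring

lemma ite_logisticCDF_eq (b : Bool) (u : ℝ) :
    (if b then logisticCDF u else 1 - logisticCDF u) =
      Real.exp ((if b then (1 : ℝ) else 0) * u) / (1 + Real.exp u) := by
  cases b
  · simp only [Bool.false_eq_true, if_false, zero_mul, Real.exp_zero, one_sub_logisticCDF]
  · simp only [if_true, one_mul, logisticCDF]

lemma prod_ite_logisticCDF_eq {ι : Type*} [Fintype ι] (a : ι → ℝ) (d : ι → Bool) (c : ℝ) :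
    ∏ t, (if d t then logisticCDF (a t + c) else 1 - logisticCDF (a t + c)) =
      Real.exp (∑ t, (if d t then (1 : ℝ) else 0) * a t) *
        (Real.exp ((∑ t, if d t then (1 : ℝ) else 0) * c) / ∏ t, (1 + Real.exp (a t + c))) := by
  have hexponent : ∑ t, (if d t then (1 : ℝ) else 0) * (a t + c) =
      ∑ t, (if d t then (1 : ℝ) else 0) * a t + (∑ t, if d t then (1 : ℝ) else 0) * c := by
    rw [sum_mul, ← sum_add_distrib]
    exact sum_congr rfl fun t _ => by ring
  simp_rw [ite_logisticCDF_eq]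
  rw [prod_div_distrib, ← Real.exp_sum, hexponent, Real.exp_add, mul_div_assoc]

lemma sum_ite_one_zero_of_mem_sumFiber {T n : ℕ} {d : Fin T → Bool} (hd : d ∈ sumFiber T n) :
    (∑ t, if d t then (1 : ℝ) else 0) = n := by
  rw [sumFiber, mem_filter] at hd
  rw [← hd.2]
  push_cast
  rfl

lemma rlikelihood_eq_of_mem_sumFiber {T n : ℕ} (a : Fin T → ℝ) (μ : Measure ℝ)
    {d : Fin T → Bool} (hd : d ∈ sumFiber T n) :
    rlikelihood a μ d = Real.exp (∑ t, (if d t then (1 : ℝ) else 0) * a t) *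
      ∫ c, Real.exp (n * c) / ∏ t, (1 + Real.exp (a t + c)) ∂μ := by
  simp_rw [rlikelihood, prod_ite_logisticCDF_eq, sum_ite_one_zero_of_mem_sumFiber hd]
  exact integral_const_mul _ _

theorem stmt_2_general {T : ℕ} (a : Fin T → ℝ) (μ : Measure ℝ)
    (n : ℕ) (y : Fin T → Bool)
    (hy : y ∈ sumFiber T n) :
    rlikelihood a μ y *
        ∑ d ∈ sumFiber T n, Real.exp (∑ t, (if d t then (1 : ℝ) else 0) * a t) =
      Real.exp (∑ t, (if y t then (1 : ℝ) else 0) * a t) *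
        ∑ d ∈ sumFiber T n, rlikelihood a μ d := by
  rw [sum_congr rfl fun d hd => rlikelihood_eq_of_mem_sumFiber a μ hd, ← sum_mul,
    rlikelihood_eq_of_mem_sumFiber a μ hy]
  ring

/-- Rasch/conditional-logit sufficiency: for every `n` with `0 ≤ n ≤ T` and every `y ∈ D_n`,
`L(y) ⬝ ∑_{d ∈ D_n} exp(∑_t d_t a_t) = exp(∑_t y_t a_t) ⬝ ∑_{d ∈ D_n} L(d)`;
equivalently, the conditional probability of the outcome sequence `y` given that the
outcomes sum to `n` equals `exp(∑_t y_t a_t)/∑_{d ∈ D_n} exp(∑_t d_t a_t)` and is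
free of the heterogeneity distribution `μ`. -/
theorem stmt_2 {T : ℕ} (hT : 1 ≤ T) (a : Fin T → ℝ) (μ : Measure ℝ)
    [IsProbabilityMeasure μ] (n : ℕ) (hn : n ≤ T) (y : Fin T → Bool)
    (hy : y ∈ sumFiber T n) :
    rlikelihood a μ y *
        ∑ d ∈ sumFiber T n, Real.exp (∑ t, (if d t then (1 : ℝ) else 0) * a t) =
      Real.exp (∑ t, (if y t then (1 : ℝ) else 0) * a t) *
        ∑ d ∈ sumFiber T n, rlikelihood a μ d :=
  stmt_2_general a μ n y hy
end

section
/- Let (Ω,𝓕,P,β,X,C,U₁,U₂) and (Ω',𝓕',P',β',X',C',U₁',U₂') be two two-period binary-response panel structures with logistic errors, with outcomes Y = (Y₁,Y₂) and Y' = (Y₁',Y₂'). Assume the topological support of the law of X₁ − X₂ under P is not contained in any proper linear subspace of ℝ^d (equivalently, its ℝ-linear span is all of ℝ^d). If the joint law of (Y₁,Y₂,X₁,X₂) under P equals the joint law of (Y₁',Y₂',X₁',X₂') under P', then β = β'. (Lemma 1, logit case: point identification of β₀.) -/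
/-!
Conditionally on `(X₁, X₂, C)`, the switching patterns `(Y₁, Y₂) = (1, 0)` and `(0, 1)` have
probabilities `Λ(a₁)(1 - Λ(a₂))` and `(1 - Λ(a₁))Λ(a₂)`, where `a_t = X_t·β + C`, and their ratio
`exp((X₁ - X₂)·β)` does not involve `C`. Integrating `C` out, the law of `(X₁, X₂)` weighted by the
probability of `(1, 0)` has density `exp((x₁ - x₂)·β)` with respect to the law weighted by the
probability of `(0, 1)`. Both weighted laws are determined by the law of `(Y, X)`, so
`exp((x₁ - x₂)·β) = exp((x₁ - x₂)·β')` almost everywhere for the second one, which is equivalent to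
the law of `(X₁, X₂)` because its weight is positive. Hence `(X₁ - X₂)·(β - β') = 0` almost surely,
the support of `X₁ - X₂` lies in the closed hyperplane orthogonal to `β - β'`, and since that
support spans `ℝ^d`, `β = β'`.
-/

open MeasureTheory ProbabilityTheory Matrix

/-- The topological support of a Borel measure: the set of points all of whose open
neighborhoods have positive measure. -/
def msupport {E : Type*} [TopologicalSpace E] [MeasurableSpace E] (μ : Measure E) : Set E :=
  {x | ∀ s : Set E, IsOpen s → x ∈ s → 0 < μ s}

open scoped ENNReal

namespace LogitPanel

lemma logisticCDF_pos (u : ℝ) : 0 < logisticCDF u := by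
  unfold logisticCDF
  positivity

lemma logisticCDF_lt_one (u : ℝ) : logisticCDF u < 1 := by
  unfold logisticCDF
  rw [div_lt_one (by positivity)]
  linarith

@[fun_prop]
lemma continuous_logisticCDF : Continuous logisticCDF :=
  Real.continuous_exp.div (continuous_const.add Real.continuous_exp) fun u => by positivity

lemma logisticCDF_mul_one_sub (a b : ℝ) :
    logisticCDF a * (1 - logisticCDF b) =
      (1 - logisticCDF a) * logisticCDF b * Real.exp (a - b) := by
  unfold logisticCDF
  rw [Real.exp_sub]
  field_simp
  ring

lemma measurable_ite_nonneg {α : Type*} [MeasurableSpace α] {f : α → ℝ} (hf : Measurable f) :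
    Measurable fun a => if 0 ≤ f a then (1 : ℝ) else 0 :=
  Measurable.ite (measurableSet_le measurable_const hf) measurable_const measurable_const

section

variable {Ω : Type*} [MeasurableSpace Ω] {P : Measure Ω}

lemma measure_ite_eq_one_of_logistic {U : Ω → ℝ}
    (hlog : ∀ u, P {ω | U ω ≤ u} = ENNReal.ofReal (logisticCDF u)) (a : ℝ) :
    P {ω | (if 0 ≤ a - U ω then (1 : ℝ) else 0) = 1} = ENNReal.ofReal (logisticCDF a) := by
  rw [← hlog a]
  congr 1
  ext ω
  simp [sub_nonneg]

lemma measure_ite_eq_zero_of_logistic [IsProbabilityMeasure P] {U : Ω → ℝ} (hU : Measurable U)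
    (hlog : ∀ u, P {ω | U ω ≤ u} = ENNReal.ofReal (logisticCDF u)) (a : ℝ) :
    P {ω | (if 0 ≤ a - U ω then (1 : ℝ) else 0) = 0} = ENNReal.ofReal (1 - logisticCDF a) := by
  have hcompl : {ω | (if 0 ≤ a - U ω then (1 : ℝ) else 0) = 0} = {ω | U ω ≤ a}ᶜ := by
    ext ω
    simp [sub_nonneg]
  rw [hcompl, prob_compl_eq_one_sub (measurableSet_le hU measurable_const), hlog,
    ENNReal.ofReal_sub _ (logisticCDF_pos a).le, ENNReal.ofReal_one]

lemma measure_setOf_and_and_eq_lintegral [IsFiniteMeasure P]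
    {α β₁ β₂ : Type*} [MeasurableSpace α] [MeasurableSpace β₁] [MeasurableSpace β₂]
    {W : Ω → α} {V₁ : Ω → β₁} {V₂ : Ω → β₂}
    (hW : Measurable W) (hV₁ : Measurable V₁) (hV₂ : Measurable V₂)
    (hind : IndepFun W (fun ω => (V₁ ω, V₂ ω)) P) (hindV : IndepFun V₁ V₂ P)
    {S₁ : Set (α × β₁)} {S₂ : Set (α × β₂)} {A : Set α}
    (hS₁ : MeasurableSet S₁) (hS₂ : MeasurableSet S₂) (hA : MeasurableSet A) :
    P {ω | (W ω, V₁ ω) ∈ S₁ ∧ (W ω, V₂ ω) ∈ S₂ ∧ W ω ∈ A} =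
      ∫⁻ w in A, P {ω | (w, V₁ ω) ∈ S₁} * P {ω | (w, V₂ ω) ∈ S₂} ∂P.map W := by
  set S : Set (α × β₁ × β₂) := {p | (p.1, p.2.1) ∈ S₁ ∧ (p.1, p.2.2) ∈ S₂ ∧ p.1 ∈ A}
  have hS : MeasurableSet S :=
    (measurable_fst.prodMk measurable_snd.fst hS₁).inter
      ((measurable_fst.prodMk measurable_snd.snd hS₂).inter (measurable_fst hA))
  have hmap : P.map (fun ω => (W ω, V₁ ω, V₂ ω)) =
      (P.map W).prod ((P.map V₁).prod (P.map V₂)) := by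
    rw [(indepFun_iff_map_prod_eq_prod_map_map hW.aemeasurable
        (hV₁.prodMk hV₂).aemeasurable).mp hind,
      (indepFun_iff_map_prod_eq_prod_map_map hV₁.aemeasurable hV₂.aemeasurable).mp hindV]
  calc P {ω | (W ω, V₁ ω) ∈ S₁ ∧ (W ω, V₂ ω) ∈ S₂ ∧ W ω ∈ A}
      = P.map (fun ω => (W ω, V₁ ω, V₂ ω)) S :=
        (Measure.map_apply (hW.prodMk (hV₁.prodMk hV₂)) hS).symm
    _ = ∫⁻ w, A.indicator (fun w => P {ω | (w, V₁ ω) ∈ S₁} * P {ω | (w, V₂ ω) ∈ S₂}) w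
          ∂P.map W := by
      rw [hmap, Measure.prod_apply hS]
      refine lintegral_congr fun w => ?_
      by_cases hw : w ∈ A
      · have hslice : Prod.mk w ⁻¹' S = (Prod.mk w ⁻¹' S₁) ×ˢ (Prod.mk w ⁻¹' S₂) := by
          ext; simp [S, hw]
        rw [Set.indicator_of_mem hw, hslice, Measure.prod_prod,
          Measure.map_apply hV₁ (measurable_prodMk_left hS₁),
          Measure.map_apply hV₂ (measurable_prodMk_left hS₂)]
        rfl
      · have hslice : Prod.mk w ⁻¹' S = ∅ := by
          ext; simp [S, hw]
        rw [Set.indicator_of_notMem hw, hslice, measure_empty]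
    _ = _ := lintegral_indicator hA _

end

lemma map_withDensity_mul_comp {α γ : Type*} [MeasurableSpace α] [MeasurableSpace γ]
    (μ : Measure α) {π : α → γ} (hπ : Measurable π) {g : α → ℝ≥0∞} (hg : Measurable g)
    {φ : γ → ℝ≥0∞} (hφ : Measurable φ) :
    (μ.withDensity fun w => g w * φ (π w)).map π = ((μ.withDensity g).map π).withDensity φ := by
  ext B hB
  rw [withDensity_apply _ hB, Measure.map_apply hπ hB, withDensity_apply _ (hπ hB),
    setLIntegral_map hB hφ hπ, restrict_withDensity (hπ hB)]
  exact (lintegral_withDensity_eq_lintegral_mul _ hg (hφ.comp hπ)).symm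

lemma msupport_subset_of_ae_mem {E : Type*} [TopologicalSpace E] [MeasurableSpace E]
    {μ : Measure E} {s : Set E} (hs : IsClosed s) (h : ∀ᵐ x ∂μ, x ∈ s) : msupport μ ⊆ s := by
  intro x hx
  by_contra hxs
  exact (hx sᶜ hs.isOpen_compl hxs).ne' (ae_iff.mp h)

lemma eq_zero_of_ae_dotProduct_eq_zero {d : ℕ} {μ : Measure (Fin d → ℝ)}
    (hspan : Submodule.span ℝ (msupport μ) = ⊤) {v : Fin d → ℝ}
    (h : ∀ᵐ z ∂μ, z ⬝ᵥ v = 0) : v = 0 := by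
  have hsupp : msupport μ ⊆ {z | z ⬝ᵥ v = 0} :=
    msupport_subset_of_ae_mem (isClosed_eq (by fun_prop) continuous_const) h
  have horth : ∀ z ∈ Submodule.span ℝ (msupport μ), z ⬝ᵥ v = 0 := by
    intro z hz
    induction hz using Submodule.span_induction with
    | mem z hz => exact hsupp hz
    | zero => exact zero_dotProduct v
    | add x y _ _ hx hy => rw [add_dotProduct, hx, hy, add_zero]
    | smul c x _ hx => rw [smul_dotProduct, hx, smul_zero]
  exact dotProduct_self_eq_zero.mp (horth v (hspan ▸ Submodule.mem_top))

section Panel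

variable {d : ℕ} {Ω : Type*} [MeasurableSpace Ω]

structure IsLogitPanel (P : Measure Ω) (β : Fin d → ℝ) (X₁ X₂ : Ω → Fin d → ℝ)
    (C U₁ U₂ Y₁ Y₂ : Ω → ℝ) : Prop where
  measurable_X₁ : Measurable X₁
  measurable_X₂ : Measurable X₂
  measurable_C : Measurable C
  measurable_U₁ : Measurable U₁
  measurable_U₂ : Measurable U₂
  indepFun_covariates_errors :
    IndepFun (fun ω => ((X₁ ω, X₂ ω), C ω)) (fun ω => (U₁ ω, U₂ ω)) P
  indepFun_errors : IndepFun U₁ U₂ P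
  cdf_U₁ : ∀ u, P {ω | U₁ ω ≤ u} = ENNReal.ofReal (logisticCDF u)
  cdf_U₂ : ∀ u, P {ω | U₂ ω ≤ u} = ENNReal.ofReal (logisticCDF u)
  Y₁_eq : Y₁ = fun ω => if 0 ≤ X₁ ω ⬝ᵥ β + C ω - U₁ ω then 1 else 0
  Y₂_eq : Y₂ = fun ω => if 0 ≤ X₂ ω ⬝ᵥ β + C ω - U₂ ω then 1 else 0

/-- Conditional probability of the outcome pattern `(Y₁, Y₂) = (1, 0)` given `((X₁, X₂), C) = w`. -/
noncomputable def probOneZero (β : Fin d → ℝ) (w : ((Fin d → ℝ) × (Fin d → ℝ)) × ℝ) : ℝ≥0∞ :=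
  ENNReal.ofReal (logisticCDF (w.1.1 ⬝ᵥ β + w.2) * (1 - logisticCDF (w.1.2 ⬝ᵥ β + w.2)))

noncomputable def probZeroOne (β : Fin d → ℝ) (w : ((Fin d → ℝ) × (Fin d → ℝ)) × ℝ) : ℝ≥0∞ :=
  ENNReal.ofReal ((1 - logisticCDF (w.1.1 ⬝ᵥ β + w.2)) * logisticCDF (w.1.2 ⬝ᵥ β + w.2))

noncomputable def oddsRatio (β : Fin d → ℝ) (x : (Fin d → ℝ) × (Fin d → ℝ)) : ℝ≥0∞ :=
  ENNReal.ofReal (Real.exp ((x.1 - x.2) ⬝ᵥ β))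

lemma measurable_probZeroOne (β : Fin d → ℝ) : Measurable (probZeroOne β) :=
  ENNReal.measurable_ofReal.comp <| Continuous.measurable <| by fun_prop

lemma measurable_oddsRatio (β : Fin d → ℝ) : Measurable (oddsRatio β) :=
  ENNReal.measurable_ofReal.comp <| Continuous.measurable <| by fun_prop

lemma probZeroOne_pos (β : Fin d → ℝ) (w : ((Fin d → ℝ) × (Fin d → ℝ)) × ℝ) :
    0 < probZeroOne β w :=
  ENNReal.ofReal_pos.mpr <|
    mul_pos (sub_pos.mpr (logisticCDF_lt_one _)) (logisticCDF_pos _)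

lemma probOneZero_eq_mul_oddsRatio (β : Fin d → ℝ) (w : ((Fin d → ℝ) × (Fin d → ℝ)) × ℝ) :
    probOneZero β w = probZeroOne β w * oddsRatio β w.1 := by
  unfold probOneZero probZeroOne oddsRatio
  rw [← ENNReal.ofReal_mul (mul_pos (sub_pos.mpr (logisticCDF_lt_one _))
    (logisticCDF_pos _)).le, logisticCDF_mul_one_sub, sub_dotProduct, add_sub_add_right_eq_sub]

lemma map_fst_withDensity_probOneZero (ρ : Measure (((Fin d → ℝ) × (Fin d → ℝ)) × ℝ))
    (β : Fin d → ℝ) :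
    (ρ.withDensity (probOneZero β)).map Prod.fst =
      ((ρ.withDensity (probZeroOne β)).map Prod.fst).withDensity (oddsRatio β) := by
  rw [funext (probOneZero_eq_mul_oddsRatio β)]
  exact map_withDensity_mul_comp ρ measurable_fst (measurable_probZeroOne β)
    (measurable_oddsRatio β)

lemma map_fst_absolutelyContinuous (ρ : Measure (((Fin d → ℝ) × (Fin d → ℝ)) × ℝ))
    (β : Fin d → ℝ) : ρ.map Prod.fst ≪ (ρ.withDensity (probZeroOne β)).map Prod.fst :=
  (withDensity_absolutelyContinuous' (measurable_probZeroOne β).aemeasurable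
    (ae_of_all _ fun w => (probZeroOne_pos β w).ne')).map measurable_fst

lemma dotProduct_sub_eq_zero_of_oddsRatio_eq {β β' : Fin d → ℝ} {x : (Fin d → ℝ) × (Fin d → ℝ)}
    (h : oddsRatio β x = oddsRatio β' x) : (x.1 - x.2) ⬝ᵥ (β - β') = 0 := by
  rw [dotProduct_sub, sub_eq_zero]
  exact Real.exp_eq_exp.mp
    ((ENNReal.ofReal_eq_ofReal_iff (Real.exp_pos _).le (Real.exp_pos _).le).mp h)

namespace IsLogitPanel

variable {P : Measure Ω} {β : Fin d → ℝ} {X₁ X₂ : Ω → Fin d → ℝ} {C U₁ U₂ Y₁ Y₂ : Ω → ℝ}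

lemma measurable_Y₁ (h : IsLogitPanel P β X₁ X₂ C U₁ U₂ Y₁ Y₂) : Measurable Y₁ := by
  have := h.measurable_X₁; have := h.measurable_C; have := h.measurable_U₁
  rw [h.Y₁_eq]
  exact measurable_ite_nonneg (by fun_prop)

lemma measurable_Y₂ (h : IsLogitPanel P β X₁ X₂ C U₁ U₂ Y₁ Y₂) : Measurable Y₂ := by
  have := h.measurable_X₂; have := h.measurable_C; have := h.measurable_U₂
  rw [h.Y₂_eq]
  exact measurable_ite_nonneg (by fun_prop)

lemma map_fst_withDensity_apply [IsProbabilityMeasure P]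
    (h : IsLogitPanel P β X₁ X₂ C U₁ U₂ Y₁ Y₂) {g : ((Fin d → ℝ) × (Fin d → ℝ)) × ℝ → ℝ≥0∞}
    {y₁ y₂ : ℝ}
    (hg : ∀ w, g w = P {ω | (if 0 ≤ w.1.1 ⬝ᵥ β + w.2 - U₁ ω then (1 : ℝ) else 0) = y₁} *
      P {ω | (if 0 ≤ w.1.2 ⬝ᵥ β + w.2 - U₂ ω then (1 : ℝ) else 0) = y₂})
    {A : Set ((Fin d → ℝ) × (Fin d → ℝ))} (hA : MeasurableSet A) :
    ((P.map fun ω => ((X₁ ω, X₂ ω), C ω)).withDensity g).map Prod.fst A =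
      P.map (fun ω => (Y₁ ω, Y₂ ω, X₁ ω, X₂ ω)) ({y₁} ×ˢ {y₂} ×ˢ A) := by
  have hX := h.measurable_X₁.prodMk h.measurable_X₂
  rw [Measure.map_apply measurable_fst hA, withDensity_apply _ (measurable_fst hA),
    Measure.map_apply (h.measurable_Y₁.prodMk (h.measurable_Y₂.prodMk hX))
      ((measurableSet_singleton _).prod ((measurableSet_singleton _).prod hA)),
    setLIntegral_congr_fun (measurable_fst hA) fun w _ => hg w, h.Y₁_eq, h.Y₂_eq]
  refine (measure_setOf_and_and_eq_lintegral (hX.prodMk h.measurable_C) h.measurable_U₁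
    h.measurable_U₂ h.indepFun_covariates_errors h.indepFun_errors
    (S₁ := {p | (if 0 ≤ p.1.1.1 ⬝ᵥ β + p.1.2 - p.2 then (1 : ℝ) else 0) = y₁})
    (S₂ := {p | (if 0 ≤ p.1.1.2 ⬝ᵥ β + p.1.2 - p.2 then (1 : ℝ) else 0) = y₂})
    ?_ ?_ (measurable_fst hA)).symm
  · exact measurable_ite_nonneg (by fun_prop) (measurableSet_singleton y₁)
  · exact measurable_ite_nonneg (by fun_prop) (measurableSet_singleton y₂)

lemma map_fst_withDensity_probOneZero_apply [IsProbabilityMeasure P]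
    (h : IsLogitPanel P β X₁ X₂ C U₁ U₂ Y₁ Y₂)
    {A : Set ((Fin d → ℝ) × (Fin d → ℝ))} (hA : MeasurableSet A) :
    ((P.map fun ω => ((X₁ ω, X₂ ω), C ω)).withDensity (probOneZero β)).map Prod.fst A =
      P.map (fun ω => (Y₁ ω, Y₂ ω, X₁ ω, X₂ ω)) ({1} ×ˢ {0} ×ˢ A) :=
  h.map_fst_withDensity_apply (fun w => by
    rw [measure_ite_eq_one_of_logistic h.cdf_U₁,
      measure_ite_eq_zero_of_logistic h.measurable_U₂ h.cdf_U₂,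
      ← ENNReal.ofReal_mul (logisticCDF_pos _).le]
    rfl) hA

lemma map_fst_withDensity_probZeroOne_apply [IsProbabilityMeasure P]
    (h : IsLogitPanel P β X₁ X₂ C U₁ U₂ Y₁ Y₂)
    {A : Set ((Fin d → ℝ) × (Fin d → ℝ))} (hA : MeasurableSet A) :
    ((P.map fun ω => ((X₁ ω, X₂ ω), C ω)).withDensity (probZeroOne β)).map Prod.fst A =
      P.map (fun ω => (Y₁ ω, Y₂ ω, X₁ ω, X₂ ω)) ({0} ×ˢ {1} ×ˢ A) :=
  h.map_fst_withDensity_apply (fun w => by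
    rw [measure_ite_eq_zero_of_logistic h.measurable_U₁ h.cdf_U₁,
      measure_ite_eq_one_of_logistic h.cdf_U₂,
      ← ENNReal.ofReal_mul (sub_pos.mpr (logisticCDF_lt_one _)).le]
    rfl) hA

lemma lintegral_oddsRatio_ne_top [IsProbabilityMeasure P]
    (h : IsLogitPanel P β X₁ X₂ C U₁ U₂ Y₁ Y₂) :
    ∫⁻ x, oddsRatio β x
      ∂((P.map fun ω => ((X₁ ω, X₂ ω), C ω)).withDensity (probZeroOne β)).map Prod.fst ≠ ∞ := by
  rw [← setLIntegral_univ, ← withDensity_apply _ MeasurableSet.univ,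
    ← map_fst_withDensity_probOneZero, h.map_fst_withDensity_probOneZero_apply MeasurableSet.univ]
  exact measure_ne_top _ _

lemma oddsRatio_ae_eq [IsProbabilityMeasure P] {Ω' : Type*} [MeasurableSpace Ω']
    {P' : Measure Ω'} [IsProbabilityMeasure P'] {β' : Fin d → ℝ} {X₁' X₂' : Ω' → Fin d → ℝ}
    {C' U₁' U₂' Y₁' Y₂' : Ω' → ℝ}
    (h : IsLogitPanel P β X₁ X₂ C U₁ U₂ Y₁ Y₂) (h' : IsLogitPanel P' β' X₁' X₂' C' U₁' U₂' Y₁' Y₂')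
    (hlaw : P.map (fun ω => (Y₁ ω, Y₂ ω, X₁ ω, X₂ ω)) =
      P'.map (fun ω => (Y₁' ω, Y₂' ω, X₁' ω, X₂' ω))) :
    oddsRatio β =ᵐ[((P.map fun ω => ((X₁ ω, X₂ ω), C ω)).withDensity (probZeroOne β)).map
      Prod.fst] oddsRatio β' := by
  have hZeroOne : ((P.map fun ω => ((X₁ ω, X₂ ω), C ω)).withDensity (probZeroOne β)).map
      Prod.fst = ((P'.map fun ω => ((X₁' ω, X₂' ω), C' ω)).withDensity (probZeroOne β')).map
      Prod.fst := Measure.ext fun A hA => by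
    rw [h.map_fst_withDensity_probZeroOne_apply hA, hlaw,
      h'.map_fst_withDensity_probZeroOne_apply hA]
  have hOneZero : ((P.map fun ω => ((X₁ ω, X₂ ω), C ω)).withDensity (probOneZero β)).map
      Prod.fst = ((P'.map fun ω => ((X₁' ω, X₂' ω), C' ω)).withDensity (probOneZero β')).map
      Prod.fst := Measure.ext fun A hA => by
    rw [h.map_fst_withDensity_probOneZero_apply hA, hlaw,
      h'.map_fst_withDensity_probOneZero_apply hA]
  rw [← withDensity_eq_iff (measurable_oddsRatio β).aemeasurable
    (measurable_oddsRatio β').aemeasurable h.lintegral_oddsRatio_ne_top,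
    ← map_fst_withDensity_probOneZero, hOneZero, map_fst_withDensity_probOneZero, hZeroOne]

end IsLogitPanel

end Panel

end LogitPanel

open LogitPanel in
/-- Lemma 1 (logit case): in a two-period binary-response panel structure with logistic
errors, if the topological support of the law of `X₁ − X₂` is not contained in any proper
linear subspace of `ℝ^d` (its span is everything) and the joint laws of `(Y₁,Y₂,X₁,X₂)`
coincide across two structures, then `β = β'`. -/
theorem stmt_3 {d : ℕ}
    {Ω : Type*} [MeasurableSpace Ω] (P : Measure Ω) [IsProbabilityMeasure P]
    {Ω' : Type*} [MeasurableSpace Ω'] (P' : Measure Ω') [IsProbabilityMeasure P']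
    (β : Fin d → ℝ) (X₁ X₂ : Ω → Fin d → ℝ) (C : Ω → ℝ) (U₁ U₂ : Ω → ℝ)
    (β' : Fin d → ℝ) (X₁' X₂' : Ω' → Fin d → ℝ) (C' : Ω' → ℝ) (U₁' U₂' : Ω' → ℝ)
    (hX₁ : Measurable X₁) (hX₂ : Measurable X₂) (hC : Measurable C)
    (hU₁ : Measurable U₁) (hU₂ : Measurable U₂)
    (hX₁' : Measurable X₁') (hX₂' : Measurable X₂') (hC' : Measurable C')
    (hU₁' : Measurable U₁') (hU₂' : Measurable U₂')
    -- mutual independence of the pair `(X, C)`, `U₁`, and `U₂`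
    (hind : IndepFun (fun ω => ((X₁ ω, X₂ ω), C ω)) (fun ω => (U₁ ω, U₂ ω)) P)
    (hindU : IndepFun U₁ U₂ P)
    (hind' : IndepFun (fun ω => ((X₁' ω, X₂' ω), C' ω)) (fun ω => (U₁' ω, U₂' ω)) P')
    (hindU' : IndepFun U₁' U₂' P')
    -- standard logistic errors
    (hlog₁ : ∀ u : ℝ, P {ω | U₁ ω ≤ u} = ENNReal.ofReal (logisticCDF u))
    (hlog₂ : ∀ u : ℝ, P {ω | U₂ ω ≤ u} = ENNReal.ofReal (logisticCDF u))
    (hlog₁' : ∀ u : ℝ, P' {ω | U₁' ω ≤ u} = ENNReal.ofReal (logisticCDF u))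
    (hlog₂' : ∀ u : ℝ, P' {ω | U₂' ω ≤ u} = ENNReal.ofReal (logisticCDF u))
    -- outcomes `Y_t = 1{X_t·β + C − U_t ≥ 0}`
    (Y₁ Y₂ : Ω → ℝ) (Y₁' Y₂' : Ω' → ℝ)
    (hY₁ : Y₁ = fun ω => if 0 ≤ X₁ ω ⬝ᵥ β + C ω - U₁ ω then 1 else 0)
    (hY₂ : Y₂ = fun ω => if 0 ≤ X₂ ω ⬝ᵥ β + C ω - U₂ ω then 1 else 0)
    (hY₁' : Y₁' = fun ω => if 0 ≤ X₁' ω ⬝ᵥ β' + C' ω - U₁' ω then 1 else 0)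
    (hY₂' : Y₂' = fun ω => if 0 ≤ X₂' ω ⬝ᵥ β' + C' ω - U₂' ω then 1 else 0)
    -- the support of the law of `X₁ − X₂` spans `ℝ^d`
    (hspan : Submodule.span ℝ (msupport (P.map fun ω => X₁ ω - X₂ ω)) = ⊤)
    -- equal joint laws of `(Y₁, Y₂, X₁, X₂)`
    (hlaw : P.map (fun ω => (Y₁ ω, Y₂ ω, X₁ ω, X₂ ω)) =
      P'.map (fun ω => (Y₁' ω, Y₂' ω, X₁' ω, X₂' ω))) :
    β = β' := by
  have hS : IsLogitPanel P β X₁ X₂ C U₁ U₂ Y₁ Y₂ :=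
    ⟨hX₁, hX₂, hC, hU₁, hU₂, hind, hindU, hlog₁, hlog₂, hY₁, hY₂⟩
  have hS' : IsLogitPanel P' β' X₁' X₂' C' U₁' U₂' Y₁' Y₂' :=
    ⟨hX₁', hX₂', hC', hU₁', hU₂', hind', hindU', hlog₁', hlog₂', hY₁', hY₂'⟩
  have hW : Measurable fun ω => ((X₁ ω, X₂ ω), C ω) := (hX₁.prodMk hX₂).prodMk hC
  have hpair : ∀ᵐ x ∂(P.map fun ω => ((X₁ ω, X₂ ω), C ω)).map Prod.fst,
      (x.1 - x.2) ⬝ᵥ (β - β') = 0 :=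
    Filter.Eventually.mono ((map_fst_absolutelyContinuous _ β).ae_le (hS.oddsRatio_ae_eq hS' hlaw))
      fun x hx => dotProduct_sub_eq_zero_of_oddsRatio_eq hx
  have hdiff : ∀ᵐ ω ∂P, (X₁ ω - X₂ ω) ⬝ᵥ (β - β') = 0 :=
    ae_of_ae_map hW.aemeasurable (ae_of_ae_map measurable_fst.aemeasurable hpair)
  have hZ : ∀ᵐ z ∂P.map (fun ω => X₁ ω - X₂ ω), z ⬝ᵥ (β - β') = 0 :=
    (ae_map_iff (hX₁.sub hX₂).aemeasurable
      (isClosed_eq (by fun_prop) continuous_const).measurableSet).mpr hdiff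
  exact sub_eq_zero.mp (eq_zero_of_ae_dotProduct_eq_zero hspan hZ)
end

section
/- Assume U is independent of (X,C) and index sufficiency holds: for every bounded measurable g : ℝ → ℝ, E[g(C) | σ(X)] = E[g(C) | σ(V)] P-almost surely, where V = v(X). Let κ = condDistrib C V P and define m(u,w) = ∫_ℝ F_U(u + c) dκ(w)(c). Then E[Y | σ(X·β, V)] = m(X·β, V) P-almost surely; that is, the observable regression of Y on the pair (X·β, V) coincides with the structural function m built from the error CDF and the conditional heterogeneity distribution given the index. (The core step of Theorem 1 showing that P(Y_t=1 | X_t'β₀ = u, V = v) equals ∫ F_{U_t}(u+c) dF_{C|V}(c|v).) -/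
/-!
Conditioning on `(X, C)` first, independence of `U` turns `Y = 1{U ≤ X·β + C}` into
`F_U(X·β + C)`. Conditioning this on `X` integrates `F_U(X·β + c)` against the conditional law of
`C` given `X`, which by index sufficiency (tested on indicators of the rational half-lines
`(-∞, q)`, a countable π-system generating the Borel sets) coincides with the conditional law
given `V`. The resulting function of `(X·β, V)` is `σ(X·β, V)`-measurable, so the tower property
along `σ(X·β, V) ≤ σ(X) ≤ σ(X, C)` concludes.
-/

open MeasureTheory ProbabilityTheory Matrix Set

namespace MeasureTheory

variable {Ω E : Type*} {mΩ : MeasurableSpace Ω} {μ : Measure Ω}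
  [NormedAddCommGroup E] [NormedSpace ℝ E] [CompleteSpace E]

theorem condExp_ae_eq_condExp_of_condExp_ae_eq {m₁ m₂ : MeasurableSpace Ω} (h₁₂ : m₁ ≤ m₂)
    (h₂ : m₂ ≤ mΩ) [SigmaFinite (μ.trim h₂)] {f g : Ω → E} (hfg : μ[f | m₂] =ᵐ[μ] g) :
    μ[f | m₁] =ᵐ[μ] μ[g | m₁] :=
  (condExp_condExp_of_le h₁₂ h₂).symm.trans (condExp_congr_ae hfg)

end MeasureTheory

namespace ProbabilityTheory

variable {Ω α β γ : Type*} {mΩ : MeasurableSpace Ω} {μ : Measure Ω}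
  {mα : MeasurableSpace α} {mγ : MeasurableSpace γ}

section Independence

variable [IsFiniteMeasure μ] [MeasurableSpace β] [StandardBorelSpace β] [Nonempty β]
  {W : Ω → α} {U : Ω → β}

theorem IndepFun.condDistrib_ae_eq_const (hW : AEMeasurable W μ) (hU : AEMeasurable U μ)
    (h : IndepFun U W μ) : condDistrib U W μ =ᵐ[μ.map W] Kernel.const α (μ.map U) :=
  condDistrib_ae_eq_of_measure_eq_compProd W hU <| by
    rw [Measure.compProd_const]
    exact (indepFun_iff_map_prod_eq_prod_map_map hW hU).mp h.symm

theorem IndepFun.condExp_comp_prodMk_ae_eq_integral_map {E : Type*} [NormedAddCommGroup E]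
    [NormedSpace ℝ E] [CompleteSpace E] (hW : Measurable W) (hU : AEMeasurable U μ)
    (h : IndepFun U W μ) {f : α × β → E} (hf : StronglyMeasurable f)
    (hfi : Integrable (fun ω => f (W ω, U ω)) μ) :
    μ[fun ω => f (W ω, U ω) | mα.comap W] =ᵐ[μ] fun ω => ∫ u, f (W ω, u) ∂(μ.map U) := by
  filter_upwards [condExp_prod_ae_eq_integral_condDistrib hW hU hf hfi,
    ae_of_ae_map hW.aemeasurable (h.condDistrib_ae_eq_const hW.aemeasurable hU)] with ω h₁ h₂
  rw [h₁, h₂, Kernel.const_apply]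

end Independence

theorem IndepFun.condExp_ite_le_ae_eq_cdf [IsProbabilityMeasure μ] {W : Ω → α} {U : Ω → ℝ}
    (hW : Measurable W) (hU : Measurable U) (h : IndepFun U W μ) {g : α → ℝ} (hg : Measurable g) :
    μ[fun ω => if U ω ≤ g (W ω) then (1 : ℝ) else 0 | mα.comap W] =ᵐ[μ]
      fun ω => cdf (μ.map U) (g (W ω)) := by
  have := Measure.isProbabilityMeasure_map (μ := μ) hU.aemeasurable
  have hf : Measurable fun p : α × ℝ => if p.2 ≤ g p.1 then (1 : ℝ) else 0 :=
    Measurable.ite (measurableSet_le measurable_snd (hg.comp measurable_fst))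
      measurable_const measurable_const
  have hfi : Integrable (fun ω => if U ω ≤ g (W ω) then (1 : ℝ) else 0) μ :=
    .of_bound (hf.comp (hW.prodMk hU)).aestronglyMeasurable 1
      (.of_forall fun ω => by split_ifs <;> simp)
  filter_upwards [h.condExp_comp_prodMk_ae_eq_integral_map hW hU.aemeasurable
    hf.stronglyMeasurable hfi] with ω hω
  rw [hω, cdf_eq_real, ← integral_indicator_one measurableSet_Iic]
  simp only [indicator_apply, mem_Iic, Pi.one_apply]

theorem condDistrib_ae_eq_of_condExp_indicator_ae_eq [IsFiniteMeasure μ] {X : Ω → α}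
    {V : Ω → γ} {C : Ω → ℝ} (hX : Measurable X) (hV : Measurable V) (hC : Measurable C)
    (h : ∀ s, MeasurableSet s → μ⟦C ⁻¹' s | mα.comap X⟧ =ᵐ[μ] μ⟦C ⁻¹' s | mγ.comap V⟧) :
    ∀ᵐ ω ∂μ, condDistrib C X μ (X ω) = condDistrib C V μ (V ω) := by
  have hIio : ∀ q : ℚ, ∀ᵐ ω ∂μ,
      condDistrib C X μ (X ω) (Iio q) = condDistrib C V μ (V ω) (Iio q) := fun q => by
    filter_upwards [condDistrib_ae_eq_condExp hX hC measurableSet_Iio,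
      condDistrib_ae_eq_condExp hV hC measurableSet_Iio, h _ measurableSet_Iio]
      with ω hXω hVω hω
    exact (measureReal_eq_measureReal_iff).mp (hXω.trans (hω.trans hVω.symm))
  filter_upwards [ae_all_iff.mpr hIio] with ω hω
  refine ext_of_generate_finite _
    (BorelSpace.measurable_eq.trans Real.borel_eq_generateFrom_Iio_rat) Real.isPiSystem_Iio_rat ?_
    (by simp)
  simp only [mem_iUnion, mem_singleton_iff, forall_exists_index]
  rintro _ q rfl
  exact hω q

theorem measurable_integral_comp_add (κ : Kernel γ ℝ) [IsSFiniteKernel κ] {f : ℝ → ℝ}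
    (hf : Measurable f) : Measurable fun p : ℝ × γ => ∫ c, f (p.1 + c) ∂κ p.2 := by
  have hf' : StronglyMeasurable fun q : (ℝ × γ) × ℝ => f (q.1.1 + q.2) := by
    fun_prop
  simpa [Kernel.comap_apply] using
    (hf'.integral_kernel_prod_right' (κ := κ.comap Prod.snd measurable_snd)).measurable

end ProbabilityTheory

/-- Assume `U ⟂ (X,C)` and index sufficiency: for every bounded measurable `g : ℝ → ℝ`,
`E[g(C) | σ(X)] = E[g(C) | σ(V)]` `P`-a.s., where `V = v(X)`.  Let `κ = condDistrib C V P`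
and `m(u,w) = ∫ F_U(u + c) dκ(w)(c)`.  Then `E[Y | σ(X·β, V)] = m(X·β, V)` `P`-a.s.:
the observable regression of `Y` on `(X·β, V)` coincides with the structural function
built from the error CDF and the conditional heterogeneity distribution given the index. -/
theorem stmt_6 {d dV : ℕ} {Ω : Type*} [MeasurableSpace Ω] (P : Measure Ω)
    [IsProbabilityMeasure P] (β : Fin d → ℝ)
    (X : Ω → Fin d → ℝ) (C : Ω → ℝ) (U : Ω → ℝ)
    (hX : Measurable X) (hC : Measurable C) (hU : Measurable U)
    (v : (Fin d → ℝ) → Fin dV → ℝ) (hv : Measurable v)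
    (hind : IndepFun U (fun ω => (X ω, C ω)) P)
    -- index sufficiency
    (hsuff : ∀ g : ℝ → ℝ, Measurable g → (∃ M, ∀ x, |g x| ≤ M) →
      P[(fun ω => g (C ω)) | MeasurableSpace.comap X inferInstance] =ᵐ[P]
        P[(fun ω => g (C ω)) |
          MeasurableSpace.comap (fun ω => v (X ω)) inferInstance])
    (Y : Ω → ℝ) (hY : Y = fun ω => if 0 ≤ X ω ⬝ᵥ β + C ω - U ω then 1 else 0)
    (F : ℝ → ℝ) (hF : ∀ u, F u = (P {ω | U ω ≤ u}).toReal) :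
    P[Y | MeasurableSpace.comap (fun ω => (X ω ⬝ᵥ β, v (X ω))) inferInstance] =ᵐ[P]
      fun ω => ∫ c, F (X ω ⬝ᵥ β + c)
        ∂(condDistrib C (fun ω' => v (X ω')) P (v (X ω))) := by
  have := Measure.isProbabilityMeasure_map (μ := P) hU.aemeasurable
  have hFcdf : F = cdf (P.map U) :=
    funext fun u => by rw [hF, cdf_eq_real, map_measureReal_apply hU measurableSet_Iic]; rfl
  have hFm : Measurable F := hFcdf ▸ (monotone_cdf _).measurable
  simp only [sub_nonneg] at hY
  subst hY
  set κ := condDistrib C (fun ω => v (X ω)) P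
  set mT := MeasurableSpace.comap (fun ω => (X ω ⬝ᵥ β, v (X ω))) inferInstance
  have hTX : mT ≤ MeasurableSpace.comap X inferInstance :=
    ((by fun_prop : Measurable fun x => (x ⬝ᵥ β, v x)).comp (comap_measurable X)).comap_le
  have hXW : MeasurableSpace.comap X inferInstance ≤
      MeasurableSpace.comap (fun ω => (X ω, C ω)) inferInstance :=
    (measurable_fst.comp (comap_measurable fun ω => (X ω, C ω))).comap_le
  have hcondXC := hFcdf ▸ hind.condExp_ite_le_ae_eq_cdf (hX.prodMk hC) hU
    (g := fun p => p.1 ⬝ᵥ β + p.2) (by fun_prop)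
  have hker := condDistrib_ae_eq_of_condExp_indicator_ae_eq (V := fun ω => v (X ω)) hX
    (hv.comp hX) hC fun s hs =>
      hsuff (s.indicator fun _ => 1) (measurable_const.indicator hs)
        ⟨1, fun x => by by_cases hx : x ∈ s <;> simp [hx]⟩
  have hcondX : P[fun ω => F (X ω ⬝ᵥ β + C ω) | MeasurableSpace.comap X inferInstance]
      =ᵐ[P] fun ω => ∫ c, F (X ω ⬝ᵥ β + c) ∂κ (v (X ω)) := by
    filter_upwards [condExp_prod_ae_eq_integral_condDistrib hX hC.aemeasurable
      (f := fun p => F (p.1 ⬝ᵥ β + p.2)) (hFm.comp (by fun_prop)).stronglyMeasurable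
      (integrable_condExp.congr hcondXC), hker] with ω hω hkω
    rw [hω, hkω]
  have hm : StronglyMeasurable[mT] fun ω => ∫ c, F (X ω ⬝ᵥ β + c) ∂κ (v (X ω)) :=
    ((measurable_integral_comp_add κ hFm).comp (comap_measurable _)).stronglyMeasurable
  calc _ =ᵐ[P] _ := condExp_ae_eq_condExp_of_condExp_ae_eq (hTX.trans hXW)
        (hX.prodMk hC).comap_le hcondXC
    _ =ᵐ[P] _ := condExp_ae_eq_condExp_of_condExp_ae_eq hTX hX.comap_le hcondX
    _ = _ := condExp_of_stronglyMeasurable (hTX.trans hX.comap_le) hm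
        (integrable_condExp.congr hcondX)
end

section
/- If x̄·β₀ lies in the topological interior of 𝒵₁, then P(for all w ∈ ℝ^{d_V}, π(β̂_N, w) = π(β₀, w)) → 1 as N → ∞; in particular, for any random vectors V₁,…,V_N, P(max_{i≤N} |1{(x̄·β̂_N, V_i) ∈ 𝒵} − 1{(x̄·β₀, V_i) ∈ 𝒵}| = 0) → 1. (The lemma on convergence of the trimming indicators, Lemma B.6 in the appendix.) -/
open MeasureTheory Matrix Filter Topology

/-!
The map `β ↦ x̄·β` is continuous, so it sends a small closed ball around `β₀` into the open set
`interior 𝒵₁`. Whenever `β̂_N` lies in that ball, `x̄·β̂_N` and `x̄·β₀` both lie in `𝒵₁`, so the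
first factor of `1{(·, w) ∈ 𝒵₁ × 𝒵_V}` equals one at both points and the two indicators agree for
every `w`. By convergence in probability this event has probability tending to one.
-/

section Probability

variable {Ω ι : Type*} [MeasurableSpace Ω] {μ : Measure Ω} [IsProbabilityMeasure μ]
  {l : Filter ι}

theorem tendsto_measure_one_of_compl_subset {A B : ι → Set Ω}
    (hB : Tendsto (fun i => μ (B i)) l (𝓝 0)) (hAB : ∀ i, (A i)ᶜ ⊆ B i) :
    Tendsto (fun i => μ (A i)) l (𝓝 1) := by
  have hlower : ∀ i, 1 - μ (B i) ≤ μ (A i) := fun i => by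
    rw [tsub_le_iff_right, ← measure_univ (μ := μ)]
    exact (measure_univ_le_add_compl (A i)).trans (by gcongr; exact hAB i)
  have hlim : Tendsto (fun i => 1 - μ (B i)) l (𝓝 1) := by
    simpa using ENNReal.Tendsto.sub tendsto_const_nhds hB (by simp)
  exact tendsto_of_tendsto_of_tendsto_of_le_of_le hlim tendsto_const_nhds hlower
    fun _ => prob_le_one (μ := μ)

theorem tendsto_measure_one_of_mem_nhds {E : Type*} [SeminormedAddCommGroup E]
    {X : ι → Ω → E} {x : E}
    (hconv : ∀ η : ℝ, 0 < η → Tendsto (fun i => μ {ω | η < ‖X i ω - x‖}) l (𝓝 0))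
    {U : Set E} (hU : U ∈ 𝓝 x) {A : ι → Set Ω} (hA : ∀ i ω, X i ω ∈ U → ω ∈ A i) :
    Tendsto (fun i => μ (A i)) l (𝓝 1) := by
  obtain ⟨η, hη, hball⟩ := Metric.nhds_basis_closedBall.mem_iff.mp hU
  refine tendsto_measure_one_of_compl_subset (hconv η hη) fun i ω hω => ?_
  by_contra hnear
  exact hω (hA i ω (hball (by simpa [dist_eq_norm] using hnear)))

end Probability

theorem Set.indicator_prod_eq_of_mem_left {α β M : Type*} [Zero M] {s : Set α} {t : Set β}
    {a b : α} (ha : a ∈ s) (hb : b ∈ s) (c : M) (w : β) :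
    (s ×ˢ t).indicator (fun _ => c) (a, w) = (s ×ˢ t).indicator (fun _ => c) (b, w) := by
  by_cases hw : w ∈ t
  · rw [indicator_of_mem (mk_mem_prod ha hw), indicator_of_mem (mk_mem_prod hb hw)]
  · rw [indicator_of_notMem (fun h => hw h.2), indicator_of_notMem (fun h => hw h.2)]

theorem stmt_15_general {d dV : ℕ} {Ω : Type*} [MeasurableSpace Ω] (P : Measure Ω)
    [IsProbabilityMeasure P]
    (βhat : ℕ → Ω → Fin d → ℝ) (β₀ : Fin d → ℝ)
    -- convergence in probability of `β̂_N` to `β₀`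
    (hconv : ∀ η : ℝ, 0 < η →
      Tendsto (fun N => P {ω | η < ‖βhat N ω - β₀‖}) atTop (𝓝 0))
    (Z₁ : Set ℝ) (ZV : Set (Fin dV → ℝ))
    (xbar : Fin d → ℝ) (hint : xbar ⬝ᵥ β₀ ∈ interior Z₁) :
    Tendsto (fun N => P {ω | ∀ w : Fin dV → ℝ,
        (Z₁ ×ˢ ZV).indicator (fun _ => (1 : ℝ)) (xbar ⬝ᵥ βhat N ω, w) =
          (Z₁ ×ˢ ZV).indicator (fun _ => (1 : ℝ)) (xbar ⬝ᵥ β₀, w)}) atTop (𝓝 1) ∧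
    ∀ V : ℕ → Ω → Fin dV → ℝ,
      Tendsto (fun N => P {ω | ∀ i < N,
          (Z₁ ×ˢ ZV).indicator (fun _ => (1 : ℝ)) (xbar ⬝ᵥ βhat N ω, V i ω) =
            (Z₁ ×ˢ ZV).indicator (fun _ => (1 : ℝ)) (xbar ⬝ᵥ β₀, V i ω)}) atTop
        (𝓝 1) := by
  have hU : {β | xbar ⬝ᵥ β ∈ interior Z₁} ∈ 𝓝 β₀ :=
    (continuous_const.dotProduct continuous_id).continuousAt.preimage_mem_nhds
      (isOpen_interior.mem_nhds hint)
  have hagree : ∀ β, xbar ⬝ᵥ β ∈ interior Z₁ → ∀ w : Fin dV → ℝ,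
      (Z₁ ×ˢ ZV).indicator (fun _ => (1 : ℝ)) (xbar ⬝ᵥ β, w) =
        (Z₁ ×ˢ ZV).indicator (fun _ => (1 : ℝ)) (xbar ⬝ᵥ β₀, w) := fun β hβ =>
    Set.indicator_prod_eq_of_mem_left (interior_subset hβ) (interior_subset hint) 1
  exact ⟨tendsto_measure_one_of_mem_nhds hconv hU fun N ω hω w => hagree _ hω w,
    fun V => tendsto_measure_one_of_mem_nhds hconv hU fun N ω hω i _ => hagree _ hω _⟩

/-- Lemma B.6 (convergence of the trimming indicators): if `β̂_N → β₀` in probability and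
`xbar·β₀` lies in the topological interior of `𝒵₁`, then with probability tending to one
the trimming indicator `π(β,w) = 1{(xbar·β, w) ∈ 𝒵₁ × 𝒵_V}` evaluated at `β̂_N` agrees
with the one evaluated at `β₀` for every `w`; in particular, for any random vectors
`V₁,…,V_N`, `P(max_{i≤N} |1{(xbar·β̂_N, V_i) ∈ 𝒵} − 1{(xbar·β₀, V_i) ∈ 𝒵}| = 0) → 1`. -/
theorem stmt_15 {d dV : ℕ} {Ω : Type*} [MeasurableSpace Ω] (P : Measure Ω)
    [IsProbabilityMeasure P]
    (βhat : ℕ → Ω → Fin d → ℝ) (β₀ : Fin d → ℝ)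
    (hm : ∀ N, Measurable (βhat N))
    -- convergence in probability of `β̂_N` to `β₀`
    (hconv : ∀ η : ℝ, 0 < η →
      Tendsto (fun N => P {ω | η < ‖βhat N ω - β₀‖}) atTop (𝓝 0))
    (Z₁ : Set ℝ) (hZ₁ : MeasurableSet Z₁) (ZV : Set (Fin dV → ℝ))
    (xbar : Fin d → ℝ) (hint : xbar ⬝ᵥ β₀ ∈ interior Z₁) :
    Tendsto (fun N => P {ω | ∀ w : Fin dV → ℝ,
        (Z₁ ×ˢ ZV).indicator (fun _ => (1 : ℝ)) (xbar ⬝ᵥ βhat N ω, w) =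
          (Z₁ ×ˢ ZV).indicator (fun _ => (1 : ℝ)) (xbar ⬝ᵥ β₀, w)}) atTop (𝓝 1) ∧
    ∀ V : ℕ → Ω → Fin dV → ℝ,
      Tendsto (fun N => P {ω | ∀ i < N,
          (Z₁ ×ˢ ZV).indicator (fun _ => (1 : ℝ)) (xbar ⬝ᵥ βhat N ω, V i ω) =
            (Z₁ ×ˢ ZV).indicator (fun _ => (1 : ℝ)) (xbar ⬝ᵥ β₀, V i ω)}) atTop
        (𝓝 1) :=
  stmt_15_general P βhat β₀ hconv Z₁ ZV xbar hint
end

section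
/- Assume U₁ is independent of the triple (X, Y₀, C) and dynamic index sufficiency holds: for every bounded measurable g : ℝ → ℝ, E[g(C) | σ(X, Y₀)] = E[g(C) | σ(V, Y₀)] P-almost surely. Let κ = condDistrib C (V,Y₀) P. Then P-almost surely, E[Y₁ | σ(X, Y₀)](ω) = ∫_ℝ F_{U₁}(X₁(ω)·β + γ·Y₀(ω) + c) dκ((V(ω), Y₀(ω)))(c); consequently, for any w̄ = (x̄, ȳ) ∈ ℝ^d × {0,1}, the dynamic average structural function ∫ F_{U₁}(x̄·β + γȳ + c) d(law of C)(c) equals ∫∫ F_{U₁}(x̄·β + γȳ + c) dκ(v,y₀)(c) d(law of (V,Y₀))(v,y₀). (The structural representation underlying the identification of the ASF in the dynamic panel model of Section 4.3.) -/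
/-!
Because `U₁` is independent of `(X, Y₀, C)`, conditioning `Y₁ = 1{U₁ ≤ X₁·β + γY₀ + C}` on
`(X, Y₀, C)` yields `F_{U₁}(X₁·β + γY₀ + C)`; the tower property and the disintegration of the law
of `((X, Y₀), C)` turn `E[Y₁ | X, Y₀]` into an integral against `condDistrib C (X, Y₀) P`.
Index sufficiency, applied to the indicators of `(-∞, q]` for rational `q`, identifies this kernel
a.e. with `condDistrib C (V, Y₀) P`, since both evaluate to the same conditional probabilities on a
countable generating π-system. The second claim is the law of total probability for the
disintegration of the law of `((V, Y₀), C)`.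
-/

open MeasureTheory ProbabilityTheory Matrix Set

lemma MeasureTheory.Measure.ext_of_Iic_rat {μ ν : Measure ℝ} [IsProbabilityMeasure μ]
    [IsProbabilityMeasure ν] (h : ∀ q : ℚ, μ (Iic (q : ℝ)) = ν (Iic (q : ℝ))) : μ = ν := by
  refine ext_of_generate_finite _
    (BorelSpace.measurable_eq.trans Real.borel_eq_generateFrom_Iic_rat) Real.isPiSystem_Iic_rat ?_
    (by simp)
  simp only [mem_iUnion, mem_singleton_iff]
  rintro _ ⟨q, rfl⟩
  exact h q

lemma integrable_cdf_comp {α : Type*} [MeasurableSpace α] {ν : Measure α} [IsFiniteMeasure ν]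
    (μ : Measure ℝ) {f : α → ℝ} (hf : Measurable f) : Integrable (fun x => cdf μ (f x)) ν :=
  Integrable.of_bound ((cdf μ).mono.measurable.comp hf).aestronglyMeasurable 1
    (.of_forall fun x => by rw [Real.norm_of_nonneg (cdf_nonneg _ _)]; exact cdf_le_one _ _)

lemma integral_ite_le_eq_cdf {μ : Measure ℝ} [IsProbabilityMeasure μ] (x : ℝ) :
    ∫ u, (if u ≤ x then (1 : ℝ) else 0) ∂μ = cdf μ x := by
  rw [cdf_eq_real, ← integral_indicator_one measurableSet_Iic]
  rfl

section

variable {Ω β : Type*} [MeasurableSpace Ω] [MeasurableSpace β] {P : Measure Ω}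
  [IsProbabilityMeasure P]

lemma condDistrib_ae_eq_const_of_indepFun {Z : Ω → β} {U : Ω → ℝ} (hZ : Measurable Z)
    (hU : Measurable U) (hind : IndepFun U Z P) :
    condDistrib U Z P =ᵐ[P.map Z] Kernel.const β (P.map U) := by
  refine condDistrib_ae_eq_of_measure_eq_compProd_of_measurable hZ hU ?_
  rw [Measure.compProd_const]
  exact (indepFun_iff_map_prod_eq_prod_map_map hZ.aemeasurable hU.aemeasurable).mp hind.symm

lemma condExp_prod_ae_eq_integral_of_indepFun {Z : Ω → β} {U : Ω → ℝ} (hZ : Measurable Z)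
    (hU : Measurable U) (hind : IndepFun U Z P) {f : β × ℝ → ℝ} (hf : StronglyMeasurable f)
    (hfi : Integrable (fun ω => f (Z ω, U ω)) P) :
    P[fun ω => f (Z ω, U ω) | MeasurableSpace.comap Z inferInstance] =ᵐ[P]
      fun ω => ∫ u, f (Z ω, u) ∂(P.map U) := by
  filter_upwards [condExp_prod_ae_eq_integral_condDistrib hZ hU.aemeasurable hf hfi,
    ae_of_ae_map hZ.aemeasurable (condDistrib_ae_eq_const_of_indepFun hZ hU hind)] with ω hω hκ
  rw [hω, hκ, Kernel.const_apply]

lemma condExp_indicator_le_ae_eq_cdf {Z : Ω → β} {U : Ω → ℝ} (hZ : Measurable Z)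
    (hU : Measurable U) (hind : IndepFun U Z P) {H : β → ℝ} (hH : Measurable H) :
    P[fun ω => if U ω ≤ H (Z ω) then (1 : ℝ) else 0 | MeasurableSpace.comap Z inferInstance]
      =ᵐ[P] fun ω => cdf (P.map U) (H (Z ω)) := by
  have := Measure.isProbabilityMeasure_map (μ := P) hU.aemeasurable
  have hf : Measurable fun p : β × ℝ => if p.2 ≤ H p.1 then (1 : ℝ) else 0 :=
    Measurable.ite (measurableSet_le measurable_snd (hH.comp measurable_fst)) measurable_const
      measurable_const
  have hfi : Integrable (fun ω => if U ω ≤ H (Z ω) then (1 : ℝ) else 0) P :=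
    Integrable.of_bound (hf.comp (hZ.prodMk hU)).aestronglyMeasurable 1
      (.of_forall fun ω => by split_ifs <;> simp)
  filter_upwards [condExp_prod_ae_eq_integral_of_indepFun hZ hU hind hf.stronglyMeasurable hfi]
    with ω hω
  rw [hω, integral_ite_le_eq_cdf]

lemma condExp_indicator_le_ae_eq_integral_condDistrib {W : Ω → β} {C U : Ω → ℝ}
    (hW : Measurable W) (hC : Measurable C) (hU : Measurable U)
    (hind : IndepFun U (fun ω => (W ω, C ω)) P) {h : β × ℝ → ℝ} (hh : Measurable h) :
    P[fun ω => if U ω ≤ h (W ω, C ω) then (1 : ℝ) else 0 | MeasurableSpace.comap W inferInstance]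
      =ᵐ[P] fun ω => ∫ c, cdf (P.map U) (h (W ω, c)) ∂(condDistrib C W P (W ω)) := by
  have hWC : Measurable fun ω => (W ω, C ω) := hW.prodMk hC
  have hle : MeasurableSpace.comap W inferInstance ≤
      MeasurableSpace.comap (fun ω => (W ω, C ω)) inferInstance :=
    Measurable.comap_le (f := W) (measurable_fst.comp (comap_measurable _))
  calc P[fun ω => if U ω ≤ h (W ω, C ω) then (1 : ℝ) else 0 | MeasurableSpace.comap W inferInstance]
      =ᵐ[P] P[P[fun ω => if U ω ≤ h (W ω, C ω) then (1 : ℝ) else 0 |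
          MeasurableSpace.comap (fun ω => (W ω, C ω)) inferInstance] |
          MeasurableSpace.comap W inferInstance] :=
        (condExp_condExp_of_le hle hWC.comap_le).symm
    _ =ᵐ[P] P[fun ω => cdf (P.map U) (h (W ω, C ω)) | MeasurableSpace.comap W inferInstance] :=
        condExp_congr_ae (condExp_indicator_le_ae_eq_cdf hWC hU hind hh)
    _ =ᵐ[P] _ :=
        condExp_prod_ae_eq_integral_condDistrib hW hC.aemeasurable
          ((cdf _).mono.measurable.comp hh).stronglyMeasurable
          (integrable_cdf_comp _ (hh.comp hWC))

lemma condDistrib_ae_eq_of_condExp_Iic_eq {γ : Type*} [MeasurableSpace γ] {W : Ω → β} {V : Ω → γ}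
    {C : Ω → ℝ} (hW : Measurable W) (hV : Measurable V) (hC : Measurable C)
    (h : ∀ q : ℚ, P⟦C ⁻¹' Iic (q : ℝ) | MeasurableSpace.comap W inferInstance⟧ =ᵐ[P]
      P⟦C ⁻¹' Iic (q : ℝ) | MeasurableSpace.comap V inferInstance⟧) :
    ∀ᵐ ω ∂P, condDistrib C W P (W ω) = condDistrib C V P (V ω) := by
  have hIic : ∀ q : ℚ, ∀ᵐ ω ∂P,
      condDistrib C W P (W ω) (Iic (q : ℝ)) = condDistrib C V P (V ω) (Iic (q : ℝ)) := fun q => by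
    filter_upwards [condDistrib_ae_eq_condExp hW hC measurableSet_Iic,
      condDistrib_ae_eq_condExp hV hC measurableSet_Iic, h q] with ω hWω hVω hω
    exact (measureReal_eq_measureReal_iff).mp (hWω.trans (hω.trans hVω.symm))
  filter_upwards [ae_all_iff.2 hIic] with ω hω
  exact Measure.ext_of_Iic_rat hω

lemma integral_integral_condDistrib {V : Ω → β} {C : Ω → ℝ} (hV : Measurable V)
    (hC : Measurable C) {g : ℝ → ℝ} (hg : Integrable g (P.map C)) :
    ∫ q, ∫ c, g c ∂(condDistrib C V P q) ∂(P.map V) = ∫ c, g c ∂(P.map C) := by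
  have hVC : Measurable fun ω => (V ω, C ω) := hV.prodMk hC
  have hgC : Integrable (fun p : β × ℝ => g p.2) (P.map fun ω => (V ω, C ω)) := by
    refine Integrable.comp_measurable ?_ measurable_snd
    rwa [Measure.map_map measurable_snd hVC]
  rw [← Measure.integral_compProd (f := fun p : β × ℝ => g p.2)
      (by rwa [compProd_map_condDistrib hC.aemeasurable]),
    compProd_map_condDistrib hC.aemeasurable, integral_map hVC.aemeasurable hgC.1,
    integral_map hC.aemeasurable hg.1]

end

theorem stmt_19_general {d dV T : ℕ} {Ω : Type*} [MeasurableSpace Ω] (P : Measure Ω)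
    [IsProbabilityMeasure P] (hT : 0 < T)
    (β : Fin d → ℝ) (γ : ℝ)
    (X : Ω → Fin T → Fin d → ℝ) (Y₀ : Ω → ℝ) (C : Ω → ℝ) (U₁ : Ω → ℝ)
    (hX : Measurable X) (hY₀ : Measurable Y₀)
    (hC : Measurable C) (hU : Measurable U₁)
    (v : (Fin T → Fin d → ℝ) → Fin dV → ℝ) (hv : Measurable v)
    -- `U₁` independent of the triple `(X, Y₀, C)`
    (hind : IndepFun U₁ (fun ω => (X ω, Y₀ ω, C ω)) P)
    -- dynamic index sufficiency
    (hsuff : ∀ g : ℝ → ℝ, Measurable g → (∃ M, ∀ x, |g x| ≤ M) →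
      P[(fun ω => g (C ω)) |
          MeasurableSpace.comap (fun ω => (X ω, Y₀ ω)) inferInstance] =ᵐ[P]
        P[(fun ω => g (C ω)) |
          MeasurableSpace.comap (fun ω => (v (X ω), Y₀ ω)) inferInstance])
    (F : ℝ → ℝ) (hF : ∀ u, F u = (P {ω | U₁ ω ≤ u}).toReal)
    (Y₁ : Ω → ℝ)
    (hY₁ : Y₁ = fun ω =>
      if 0 ≤ X ω ⟨0, hT⟩ ⬝ᵥ β + γ * Y₀ ω + C ω - U₁ ω then 1 else 0) :
    (P[Y₁ | MeasurableSpace.comap (fun ω => (X ω, Y₀ ω)) inferInstance] =ᵐ[P]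
      fun ω => ∫ c, F (X ω ⟨0, hT⟩ ⬝ᵥ β + γ * Y₀ ω + c)
        ∂(condDistrib C (fun ω' => (v (X ω'), Y₀ ω')) P (v (X ω), Y₀ ω))) ∧
    (∀ (xbar : Fin d → ℝ) (ybar : ℝ), ybar = 0 ∨ ybar = 1 →
      ∫ c, F (xbar ⬝ᵥ β + γ * ybar + c) ∂(P.map C) =
        ∫ q, (∫ c, F (xbar ⬝ᵥ β + γ * ybar + c)
            ∂(condDistrib C (fun ω' => (v (X ω'), Y₀ ω')) P q))
          ∂(P.map (fun ω => (v (X ω), Y₀ ω)))) := by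
  have := Measure.isProbabilityMeasure_map (μ := P) hU.aemeasurable
  have hFcdf : F = cdf (P.map U₁) := funext fun u => by
    rw [hF, cdf_eq_real, map_measureReal_apply hU measurableSet_Iic]
    rfl
  subst hFcdf
  have hW : Measurable fun ω => (X ω, Y₀ ω) := hX.prodMk hY₀
  have hVY : Measurable fun ω => (v (X ω), Y₀ ω) := (hv.comp hX).prodMk hY₀
  refine ⟨?_, fun xbar ybar _ => ?_⟩
  · have hind' : IndepFun U₁ (fun ω => ((X ω, Y₀ ω), C ω)) P := by
      have hassoc : Measurable fun p : (Fin T → Fin d → ℝ) × ℝ × ℝ => ((p.1, p.2.1), p.2.2) := by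
        fun_prop
      exact hind.comp measurable_id hassoc
    have hY₁' : Y₁ = fun ω =>
        if U₁ ω ≤ X ω ⟨0, hT⟩ ⬝ᵥ β + γ * Y₀ ω + C ω then (1 : ℝ) else 0 := by
      simp only [hY₁, sub_nonneg]
    have hker := condDistrib_ae_eq_of_condExp_Iic_eq hW hVY hC fun q =>
      hsuff _ (measurable_const.indicator measurableSet_Iic) ⟨1, fun x => by
        by_cases hx : x ≤ q <;> simp [hx]⟩
    rw [hY₁']
    filter_upwards [condExp_indicator_le_ae_eq_integral_condDistrib hW hC hU hind'
      (h := fun p => p.1.1 ⟨0, hT⟩ ⬝ᵥ β + γ * p.1.2 + p.2) (by fun_prop), hker] with ω hω hκ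
    rw [hω, hκ]
  · have := Measure.isProbabilityMeasure_map (μ := P) hC.aemeasurable
    exact (integral_integral_condDistrib hVY hC (integrable_cdf_comp _ (by fun_prop))).symm

/-- Dynamic panel (Section 4.3): assume `U₁ ⟂ (X, Y₀, C)` and dynamic index sufficiency
`E[g(C) | σ(X, Y₀)] = E[g(C) | σ(V, Y₀)]` a.s. for every bounded measurable `g`.  With
`κ = condDistrib C (V,Y₀) P`, the regression of `Y₁ = 1{X₁·β + γY₀ + C − U₁ ≥ 0}` on
`(X, Y₀)` equals `∫ F_{U₁}(X₁·β + γY₀ + c) dκ(V,Y₀)(c)` a.s.; consequently, for any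
`w̄ = (xbar, ybar)` with `ybar ∈ {0,1}`, the dynamic ASF
`∫ F_{U₁}(xbar·β + γ·ybar + c) d(law C)(c)` equals the partial mean
`∫∫ F_{U₁}(xbar·β + γ·ybar + c) dκ(v,y₀)(c) d(law (V,Y₀))(v,y₀)`. -/
theorem stmt_19 {d dV T : ℕ} {Ω : Type*} [MeasurableSpace Ω] (P : Measure Ω)
    [IsProbabilityMeasure P] (hT : 0 < T)
    (β : Fin d → ℝ) (γ : ℝ)
    (X : Ω → Fin T → Fin d → ℝ) (Y₀ : Ω → ℝ) (C : Ω → ℝ) (U₁ : Ω → ℝ)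
    (hX : Measurable X) (hY₀ : Measurable Y₀) (hY₀01 : ∀ ω, Y₀ ω = 0 ∨ Y₀ ω = 1)
    (hC : Measurable C) (hU : Measurable U₁)
    (v : (Fin T → Fin d → ℝ) → Fin dV → ℝ) (hv : Measurable v)
    -- `U₁` independent of the triple `(X, Y₀, C)`
    (hind : IndepFun U₁ (fun ω => (X ω, Y₀ ω, C ω)) P)
    -- dynamic index sufficiency
    (hsuff : ∀ g : ℝ → ℝ, Measurable g → (∃ M, ∀ x, |g x| ≤ M) →
      P[(fun ω => g (C ω)) |
          MeasurableSpace.comap (fun ω => (X ω, Y₀ ω)) inferInstance] =ᵐ[P]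
        P[(fun ω => g (C ω)) |
          MeasurableSpace.comap (fun ω => (v (X ω), Y₀ ω)) inferInstance])
    (F : ℝ → ℝ) (hF : ∀ u, F u = (P {ω | U₁ ω ≤ u}).toReal)
    (Y₁ : Ω → ℝ)
    (hY₁ : Y₁ = fun ω =>
      if 0 ≤ X ω ⟨0, hT⟩ ⬝ᵥ β + γ * Y₀ ω + C ω - U₁ ω then 1 else 0) :
    (P[Y₁ | MeasurableSpace.comap (fun ω => (X ω, Y₀ ω)) inferInstance] =ᵐ[P]
      fun ω => ∫ c, F (X ω ⟨0, hT⟩ ⬝ᵥ β + γ * Y₀ ω + c)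
        ∂(condDistrib C (fun ω' => (v (X ω'), Y₀ ω')) P (v (X ω), Y₀ ω))) ∧
    (∀ (xbar : Fin d → ℝ) (ybar : ℝ), ybar = 0 ∨ ybar = 1 →
      ∫ c, F (xbar ⬝ᵥ β + γ * ybar + c) ∂(P.map C) =
        ∫ q, (∫ c, F (xbar ⬝ᵥ β + γ * ybar + c)
            ∂(condDistrib C (fun ω' => (v (X ω'), Y₀ ω')) P q))
          ∂(P.map (fun ω => (v (X ω), Y₀ ω)))) :=
  stmt_19_general P hT β γ X Y₀ C U₁ hX hY₀ hC hU v hv hind hsuff F hF Y₁ hY₁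
end
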